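/- arXiv:2506.04670 — 2 statements merged into one kernel-verified Lean document; each statement's English description precedes it below -/
import Mathlib

section
/- The Paley graph P(25) on the field of 25 elements is 1-geodesic transitive but not 2-geodesic transitive: Aut(P(25)) acts transitively on the vertices and on the ordered pairs of adjacent vertices of P(25), but there exist two 2-geodesics of P(25) that are not mapped to one another by any automorphism of P(25). -/
open SimpleGraph

/-- The Paley graph on a finite field `F` with `|F| ≡ 1 (mod 4)`: distinct `u, v`
are adjacent iff `u - v` is a (necessarily nonzero) square. -/
def paleyGraph (F : Type*) [Field F] [Fintype F] (h : Fintype.card F % 4 = 1) :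
    SimpleGraph F where
  Adj u v := u ≠ v ∧ ∃ s : F, u - v = s ^ 2
  symm := ⟨by
    rintro u v ⟨huv, s, hs⟩
    refine ⟨huv.symm, ?_⟩
    obtain ⟨i, hi⟩ : IsSquare (-1 : F) :=
      (FiniteField.isSquare_neg_one_iff).2 (by omega)
    exact ⟨i * s, by linear_combination -hs + s ^ 2 * hi⟩⟩
  loopless := ⟨fun u h => h.1 rfl⟩

variable {V : Type*}

/-- The automorphism group of a simple graph, as a subgroup of the permutation
group of the vertex set. -/
def SimpleGraph.autGroup (Γ : SimpleGraph V) : Subgroup (Equiv.Perm V) where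
  carrier := {f | ∀ u v : V, Γ.Adj (f u) (f v) ↔ Γ.Adj u v}
  one_mem' := by intro u v; simp
  mul_mem' := by
    intro f g hf hg u v
    simp only [Equiv.Perm.mul_apply]
    rw [hf, hg]
  inv_mem' := by
    intro f hf u v
    have h := hf (f⁻¹ u) (f⁻¹ v)
    simpa using h.symm

/-!
For `t ≠ 0` the map `x ↦ t² x + b` multiplies differences by the square `t²`, so it is an
automorphism of `P(q)`; these maps are already transitive on vertices and on arcs. By uniqueness
of finite fields, `P(25)` is isomorphic to the Paley graph on `𝔽₅(ω)`, `ω² = 2`, where adjacency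
is decidable. There the 2-geodesics `(0, 1, ω)` and `(0, 1, 4 + 2ω)` have respectively 2 and 3
vertices adjacent to all three of their vertices, a count that automorphisms preserve.
-/

open scoped QuadraticAlgebra

instance paleyGraph.instDecidableRelAdj {F : Type*} [Field F] [Fintype F] [DecidableEq F]
    (h : Fintype.card F % 4 = 1) : DecidableRel (paleyGraph F h).Adj :=
  fun u v => inferInstanceAs (Decidable (u ≠ v ∧ ∃ s : F, u - v = s ^ 2))

namespace SimpleGraph

open Finset

variable {W : Type*} {G : SimpleGraph V} {H : SimpleGraph W}

def IsTwoGeodesic (G : SimpleGraph V) (u₀ u₁ u₂ : V) : Prop :=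
  G.Adj u₀ u₁ ∧ G.Adj u₁ u₂ ∧ G.dist u₀ u₂ = 2

theorem isTwoGeodesic_iff {u₀ u₁ u₂ : V} :
    G.IsTwoGeodesic u₀ u₁ u₂ ↔ G.Adj u₀ u₁ ∧ G.Adj u₁ u₂ ∧ u₀ ≠ u₂ ∧ ¬G.Adj u₀ u₂ := by
  refine and_congr_right fun h₀₁ => and_congr_right fun h₁₂ => ?_
  have hr : G.Reachable u₀ u₂ := h₀₁.reachable.trans h₁₂.reachable
  rw [← Nat.cast_inj (R := ℕ∞), hr.coe_dist_eq_edist, Nat.cast_ofNat, edist_eq_two_iff]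
  exact ⟨fun h => ⟨h.1, h.2.1⟩, fun h => ⟨h.1, h.2, u₁, h₀₁, h₁₂.symm⟩⟩

theorem Iso.isTwoGeodesic_iff (e : G ≃g H) {u₀ u₁ u₂ : V} :
    H.IsTwoGeodesic (e u₀) (e u₁) (e u₂) ↔ G.IsTwoGeodesic u₀ u₁ u₂ := by
  simp only [SimpleGraph.isTwoGeodesic_iff, e.map_adj_iff, e.injective.ne_iff]

theorem Iso.permCongr_mem_autGroup (e : G ≃g H) {g : Equiv.Perm V} (hg : g ∈ G.autGroup) :
    e.toEquiv.permCongr g ∈ H.autGroup := fun u v => by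
  show H.Adj (e (g (e.symm u))) (e (g (e.symm v))) ↔ H.Adj u v
  rw [e.map_adj_iff, hg, e.symm.map_adj_iff]

theorem card_filter_forall_adj_map_of_mem_autGroup [Fintype V] [DecidableRel G.Adj]
    {g : Equiv.Perm V} (hg : g ∈ G.autGroup) (S : Finset V) :
    #{w | ∀ u ∈ S.map g.toEmbedding, G.Adj w u} = #{w | ∀ u ∈ S, G.Adj w u} := by
  refine card_equiv g.symm fun w => ?_
  simp only [mem_filter, mem_univ, true_and, forall_mem_map, Equiv.coe_toEmbedding]
  exact forall₂_congr fun u _ => by rw [← hg (g.symm w) u, Equiv.apply_symm_apply]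

end SimpleGraph

section Paley

variable {F : Type*} [Field F]

def squareMulAddPerm (t : F) (ht : t ≠ 0) (b : F) : Equiv.Perm F :=
  (Equiv.mulLeft₀ (t ^ 2) (pow_ne_zero 2 ht)).trans (Equiv.addRight b)

@[simp]
theorem squareMulAddPerm_apply (t : F) (ht : t ≠ 0) (b x : F) :
    squareMulAddPerm t ht b x = t ^ 2 * x + b :=
  rfl

variable [Fintype F] {h : Fintype.card F % 4 = 1}

theorem squareMulAddPerm_mem_autGroup (t : F) (ht : t ≠ 0) (b : F) :
    squareMulAddPerm t ht b ∈ (paleyGraph F h).autGroup := by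
  intro u v
  show (t ^ 2 * u + b ≠ t ^ 2 * v + b ∧ ∃ s, t ^ 2 * u + b - (t ^ 2 * v + b) = s ^ 2) ↔
    (u ≠ v ∧ ∃ s, u - v = s ^ 2)
  rw [(Equiv.mulLeft₀ t ht).surjective.exists]
  simp only [add_left_inj, ne_eq, mul_right_inj' (pow_ne_zero 2 ht), add_sub_add_right_eq_sub,
    ← mul_sub, Equiv.mulLeft₀_apply, mul_pow]

theorem paleyGraph.exists_ne_zero_sub_eq_sq {u v : F} (huv : (paleyGraph F h).Adj u v) :
    ∃ p ≠ 0, u - v = p ^ 2 := by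
  obtain ⟨hne, p, hp⟩ := huv
  refine ⟨p, ?_, hp⟩
  rintro rfl
  exact hne (sub_eq_zero.mp (by simpa using hp))

theorem paleyGraph.exists_mem_autGroup_apply_eq (u v : F) :
    ∃ g ∈ (paleyGraph F h).autGroup, g u = v :=
  ⟨squareMulAddPerm 1 one_ne_zero (v - u), squareMulAddPerm_mem_autGroup _ _ _, by simp⟩

theorem paleyGraph.exists_mem_autGroup_apply_eq_and_apply_eq {u₀ u₁ v₀ v₁ : F}
    (hu : (paleyGraph F h).Adj u₀ u₁) (hv : (paleyGraph F h).Adj v₀ v₁) :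
    ∃ g ∈ (paleyGraph F h).autGroup, g u₀ = v₀ ∧ g u₁ = v₁ := by
  obtain ⟨p, hp0, hp⟩ := paleyGraph.exists_ne_zero_sub_eq_sq hu
  obtain ⟨q, hq0, hq⟩ := paleyGraph.exists_ne_zero_sub_eq_sq hv
  refine ⟨squareMulAddPerm (q / p) (div_ne_zero hq0 hp0) (v₀ - (q / p) ^ 2 * u₀),
    squareMulAddPerm_mem_autGroup _ _ _, by simp, ?_⟩
  rw [squareMulAddPerm_apply]
  field_simp
  linear_combination p ^ 2 * hq - q ^ 2 * hp

def RingEquiv.paleyGraphIso {K : Type*} [Field K] [Fintype K] (e : F ≃+* K)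
    (hF : Fintype.card F % 4 = 1) (hK : Fintype.card K % 4 = 1) :
    paleyGraph F hF ≃g paleyGraph K hK where
  toEquiv := e.toEquiv
  map_rel_iff' {u v} := by
    show (e u ≠ e v ∧ ∃ s, e u - e v = s ^ 2) ↔ (u ≠ v ∧ ∃ s, u - v = s ^ 2)
    simp only [e.injective.ne_iff, ← map_sub, e.surjective.exists, ← map_pow, e.injective.eq_iff]

end Paley

instance : Fact (Nat.Prime 5) := ⟨Nat.prime_five⟩

instance : Fact (∀ r : ZMod 5, r ^ 2 ≠ 2 + 0 * r) := ⟨by decide⟩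

/-- `GF(25)` as `𝔽₅(ω)` with `ω² = 2`, a non-square mod 5. -/
abbrev GF25 : Type := QuadraticAlgebra (ZMod 5) 2 0

instance : Fintype GF25 := Fintype.ofEquiv _ (QuadraticAlgebra.equivProd 2 0).symm

namespace GF25

open Finset

theorem card : Fintype.card GF25 = 25 := by
  rw [Fintype.card_congr (QuadraticAlgebra.equivProd 2 0)]
  rfl

theorem card_mod_four : Fintype.card GF25 % 4 = 1 := by rw [card]

abbrev paleyGraph : SimpleGraph GF25 := _root_.paleyGraph GF25 card_mod_four

theorem isTwoGeodesic_zero_one_omega : paleyGraph.IsTwoGeodesic 0 1 ω :=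
  SimpleGraph.isTwoGeodesic_iff.mpr (by decide)

theorem isTwoGeodesic_zero_one_four_add_two_omega : paleyGraph.IsTwoGeodesic 0 1 (4 + 2 * ω) :=
  SimpleGraph.isTwoGeodesic_iff.mpr (by decide)

theorem apply_omega_ne_of_mem_autGroup {g : Equiv.Perm GF25} (hg : g ∈ paleyGraph.autGroup)
    (h₀ : g 0 = 0) (h₁ : g 1 = 1) : g ω ≠ 4 + 2 * ω := by
  intro hω
  have hcard := SimpleGraph.card_filter_forall_adj_map_of_mem_autGroup hg {0, 1, ω}
  simp only [map_insert, map_singleton, Equiv.coe_toEmbedding, h₀, h₁, hω] at hcard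
  exact absurd hcard (by decide)

end GF25

/-- The Paley graph `P(25)` on the field `GF(25)` of `25` elements
is `1`-geodesic transitive but not `2`-geodesic transitive: its automorphism group is
transitive on vertices and on ordered pairs of adjacent vertices, but some two
`2`-geodesics are not equivalent under any automorphism. -/
theorem paley25_one_geodesic_transitive_not_two
    (F : Type*) [Field F] [Fintype F] (hF : Fintype.card F = 25)
    (h4 : Fintype.card F % 4 = 1) :
    (∀ u v : F, ∃ g ∈ (paleyGraph F h4).autGroup, g u = v) ∧
    (∀ u₀ u₁ v₀ v₁ : F, (paleyGraph F h4).Adj u₀ u₁ → (paleyGraph F h4).Adj v₀ v₁ →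
      ∃ g ∈ (paleyGraph F h4).autGroup, g u₀ = v₀ ∧ g u₁ = v₁) ∧
    ∃ u₀ u₁ u₂ v₀ v₁ v₂ : F,
      ((paleyGraph F h4).Adj u₀ u₁ ∧ (paleyGraph F h4).Adj u₁ u₂ ∧
        (paleyGraph F h4).dist u₀ u₂ = 2) ∧
      ((paleyGraph F h4).Adj v₀ v₁ ∧ (paleyGraph F h4).Adj v₁ v₂ ∧
        (paleyGraph F h4).dist v₀ v₂ = 2) ∧
      ∀ g ∈ (paleyGraph F h4).autGroup, ¬ (g u₀ = v₀ ∧ g u₁ = v₁ ∧ g u₂ = v₂) := by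
  let e : paleyGraph F h4 ≃g GF25.paleyGraph :=
    (FiniteField.ringEquivOfCardEq (hF.trans GF25.card.symm)).paleyGraphIso _ _
  refine ⟨paleyGraph.exists_mem_autGroup_apply_eq,
    fun _ _ _ _ => paleyGraph.exists_mem_autGroup_apply_eq_and_apply_eq,
    e.symm 0, e.symm 1, e.symm ω, e.symm 0, e.symm 1, e.symm (4 + 2 * ω),
    e.symm.isTwoGeodesic_iff.mpr GF25.isTwoGeodesic_zero_one_omega,
    e.symm.isTwoGeodesic_iff.mpr GF25.isTwoGeodesic_zero_one_four_add_two_omega, ?_⟩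
  rintro g hg ⟨h₀, h₁, hω⟩
  have hconj (x : GF25) : e.toEquiv.permCongr g x = e (g (e.symm x)) := rfl
  refine GF25.apply_omega_ne_of_mem_autGroup (e.permCongr_mem_autGroup hg) ?_ ?_ ?_ <;>
    simp only [hconj, h₀, h₁, hω, RelIso.apply_symm_apply]
end

section
/- Let G = ⟨a,b | a^{11} = b^2 = 1, bab^{-1} = a^{-1}⟩ be the dihedral group of order 22 and let S = {b, a^2 b, a^6 b, a^7 b, a^8 b, a^{10} b}. Then the Cayley graph Cay(G,S) (the graph 𝒢_{22,6}) is 2-geodesic transitive but not 3-geodesic transitive: Aut(Cay(G,S)) acts transitively on the set of i-geodesics of Cay(G,S) for i = 1 and i = 2, but not on the set of 3-geodesics. -/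
open SimpleGraph DihedralGroup

/-- The generator `a = r 1` of rotations in the dihedral group of order 22. -/
def dihA : DihedralGroup 11 := DihedralGroup.r 1

/-- The reflection `b = sr 0` in the dihedral group of order 22. -/
def dihB : DihedralGroup 11 := DihedralGroup.sr 0

/-- The connection set `S = {b, a²b, a⁶b, a⁷b, a⁸b, a¹⁰b}`. -/
def g226S : Finset (DihedralGroup 11) :=
  {dihB, dihA ^ 2 * dihB, dihA ^ 6 * dihB, dihA ^ 7 * dihB, dihA ^ 8 * dihB,
    dihA ^ 10 * dihB}

/-- The graph `𝒢_{22,6}`: the Cayley graph `Cay(G, S)` of the dihedral group `G` of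
order `22` with respect to `S = {b, a²b, a⁶b, a⁷b, a⁸b, a¹⁰b}`. -/
def g226 : SimpleGraph (DihedralGroup 11) where
  Adj x y := y * x⁻¹ ∈ g226S
  symm := by
    have h : ∀ x y : DihedralGroup 11, y * x⁻¹ ∈ g226S → x * y⁻¹ ∈ g226S := by decide
    exact ⟨fun x y hxy => h x y hxy⟩
  loopless := by
    have h : ∀ x : DihedralGroup 11, ¬ x * x⁻¹ ∈ g226S := by decide
    exact ⟨h⟩

variable {V : Type*}

/-- An `s`-geodesic of a graph: a sequence of `s+1` vertices, consecutively
adjacent, whose endpoints are at distance `s`. -/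
def SimpleGraph.IsNGeodesic (Γ : SimpleGraph V) (s : ℕ) (u : Fin (s + 1) → V) : Prop :=
  (∀ i : Fin s, Γ.Adj (u i.castSucc) (u i.succ)) ∧ Γ.dist (u 0) (u (Fin.last s)) = s

/-- `(G,s)`-geodesic transitivity: `G` is transitive on vertices and, for each
`1 ≤ i ≤ s`, the graph has an `i`-geodesic and `G` is transitive on `i`-geodesics. -/
def SimpleGraph.GeodesicTransitiveOn (Γ : SimpleGraph V) (G : Subgroup (Equiv.Perm V))
    (s : ℕ) : Prop :=
  (∀ u v : V, ∃ g ∈ G, g u = v) ∧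
  ∀ i : ℕ, 1 ≤ i → i ≤ s →
    (∃ u : Fin (i + 1) → V, Γ.IsNGeodesic i u) ∧
    ∀ u w : Fin (i + 1) → V, Γ.IsNGeodesic i u → Γ.IsNGeodesic i w →
      ∃ g ∈ G, ∀ j, g (u j) = w j

/-!
Since `a ^ k * b = sr (-k)`, the connection set is `S = {sr d | d ∈ {0, 1, 3, 4, 5, 9}}`: `d` is
zero or a nonzero square mod `11`. Hence the dilations `r i ↦ r (k * i)`, `sr i ↦ sr (k * i)` by
nonzero squares `k` are group automorphisms preserving `S`, so graph automorphisms fixing `1` and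
`b = sr 0`. With the right translations and one further involution fixing `1`, they make `Aut`
transitive on vertices, the stabiliser of `1` transitive on its neighbours, and the stabiliser of
the arc `(1, b)` transitive on the other neighbours of `b`; so `Aut` is transitive on 2-arcs,
which are the 2-geodesics. For 3-geodesics `(u₀, u₁, u₂, u₃)`, the number of edges between the
common neighbourhoods of `u₀, u₂` and of `u₁, u₃` is `Aut`-invariant, and it is `5` on
`(1, b, r 2, sr 6)` but `6` on `(1, b, r 2, sr 2)`.
-/

open Finset

theorem exists_mem_map_of_forall_exists_mem_map_to {ι : Type*} {G : Subgroup (Equiv.Perm V)}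
    {P : (ι → V) → Prop} (c : ι → V) (h : ∀ u, P u → ∃ g ∈ G, ∀ j, g (u j) = c j)
    {u w : ι → V} (hu : P u) (hw : P w) : ∃ g ∈ G, ∀ j, g (u j) = w j := by
  obtain ⟨g, hg, hgu⟩ := h u hu
  obtain ⟨g', hg', hg'w⟩ := h w hw
  refine ⟨g'⁻¹ * g, mul_mem (inv_mem hg') hg, fun j => ?_⟩
  rw [Equiv.Perm.mul_apply, hgu, Equiv.Perm.inv_eq_iff_eq, hg'w]

namespace SimpleGraph

variable {Γ : SimpleGraph V}

theorem mem_autGroup_iff {f : Equiv.Perm V} :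
    f ∈ Γ.autGroup ↔ ∀ u v, Γ.Adj (f u) (f v) ↔ Γ.Adj u v := Iff.rfl

theorem dist_eq_two_iff {u v : V} :
    Γ.dist u v = 2 ↔ u ≠ v ∧ ¬ Γ.Adj u v ∧ (Γ.commonNeighbors u v).Nonempty := by
  rw [dist, ENat.toNat_eq_iff two_ne_zero]
  exact edist_eq_two_iff

theorem isNGeodesic_one_iff {u : Fin 2 → V} : Γ.IsNGeodesic 1 u ↔ Γ.Adj (u 0) (u 1) := by
  simp [IsNGeodesic, Fin.forall_fin_one, dist_eq_one_iff_adj]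

theorem isNGeodesic_two_iff {u : Fin 3 → V} :
    Γ.IsNGeodesic 2 u ↔
      Γ.Adj (u 0) (u 1) ∧ Γ.Adj (u 1) (u 2) ∧ u 0 ≠ u 2 ∧ ¬ Γ.Adj (u 0) (u 2) := by
  simp only [IsNGeodesic, Fin.forall_fin_two, dist_eq_two_iff]
  constructor
  · rintro ⟨⟨h₀₁, h₁₂⟩, hne, hn, -⟩
    exact ⟨h₀₁, h₁₂, hne, hn⟩
  · rintro ⟨h₀₁, h₁₂, hne, hn⟩
    exact ⟨⟨h₀₁, h₁₂⟩, hne, hn, u 1, Γ.mem_commonNeighbors.2 ⟨h₀₁, h₁₂.symm⟩⟩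

theorem isNGeodesic_three_of {u : Fin 4 → V} (h₀₁ : Γ.Adj (u 0) (u 1))
    (h₁₂ : Γ.Adj (u 1) (u 2)) (h₂₃ : Γ.Adj (u 2) (u 3)) (hne : u 0 ≠ u 3)
    (hn : ¬ Γ.Adj (u 0) (u 3)) (hc : ∀ y, ¬ (Γ.Adj (u 0) y ∧ Γ.Adj y (u 3))) :
    Γ.IsNGeodesic 3 u := by
  have hlt : 2 < Γ.edist (u 0) (u 3) :=
    two_lt_edist_iff.2 ⟨hne, hn, Set.eq_empty_of_forall_notMem fun y hy =>
      hc y ⟨(Γ.mem_commonNeighbors.1 hy).1, (Γ.mem_commonNeighbors.1 hy).2.symm⟩⟩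
  have hle : Γ.edist (u 0) (u 3) ≤ 3 := by
    simpa using (Walk.cons h₀₁ (.cons h₁₂ (.cons h₂₃ .nil))).edist_le
  refine ⟨fun i => by fin_cases i <;> assumption, ?_⟩
  rw [dist, ENat.toNat_eq_iff three_ne_zero]
  exact le_antisymm hle (Order.add_one_le_of_lt hlt)

section LocallyTransitive

variable {v w x : V} (hv : ∀ u, ∃ g ∈ Γ.autGroup, g u = v)
  (hw : ∀ y, Γ.Adj v y → ∃ g ∈ Γ.autGroup, g v = v ∧ g y = w)
  (hx : ∀ y, Γ.Adj w y → y ≠ v → ¬ Γ.Adj v y → ∃ g ∈ Γ.autGroup, g v = v ∧ g w = w ∧ g y = x)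
include hv hw

theorem exists_mem_autGroup_map_adj {u₀ u₁ : V} (h : Γ.Adj u₀ u₁) :
    ∃ g ∈ Γ.autGroup, g u₀ = v ∧ g u₁ = w := by
  obtain ⟨g, hg, rfl⟩ := hv u₀
  obtain ⟨g', hg', hg'v, hg'w⟩ := hw (g u₁) ((mem_autGroup_iff.1 hg _ _).2 h)
  exact ⟨g' * g, mul_mem hg' hg, hg'v, hg'w⟩

include hx in
theorem exists_mem_autGroup_map_two_arc {u₀ u₁ u₂ : V} (h₀₁ : Γ.Adj u₀ u₁) (h₁₂ : Γ.Adj u₁ u₂)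
    (hne : u₀ ≠ u₂) (hn : ¬ Γ.Adj u₀ u₂) :
    ∃ g ∈ Γ.autGroup, g u₀ = v ∧ g u₁ = w ∧ g u₂ = x := by
  obtain ⟨g, hg, rfl, rfl⟩ := exists_mem_autGroup_map_adj hv hw h₀₁
  have hgΓ := mem_autGroup_iff.1 hg
  obtain ⟨g', hg', h₀, h₁, h₂⟩ :=
    hx (g u₂) ((hgΓ _ _).2 h₁₂) (g.injective.ne hne.symm) (by rwa [hgΓ])
  exact ⟨g' * g, mul_mem hg' hg, h₀, h₁, h₂⟩

include hx in
theorem geodesicTransitiveOn_autGroup_two (hvwx : Γ.IsNGeodesic 2 ![v, w, x]) :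
    Γ.GeodesicTransitiveOn Γ.autGroup 2 := by
  refine ⟨fun u u' => ?_, fun i hi₁ hi₂ => ?_⟩
  · obtain ⟨g, hg, hgu⟩ := hv u
    obtain ⟨g', hg', hg'u'⟩ := hv u'
    refine ⟨g'⁻¹ * g, mul_mem (inv_mem hg') hg, ?_⟩
    rw [Equiv.Perm.mul_apply, hgu, Equiv.Perm.inv_eq_iff_eq, hg'u']
  interval_cases i
  · refine ⟨⟨![v, w], isNGeodesic_one_iff.2 (isNGeodesic_two_iff.1 hvwx).1⟩,
      fun u u' hu hu' => exists_mem_map_of_forall_exists_mem_map_to ![v, w] (fun u hu => ?_) hu hu'⟩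
    obtain ⟨g, hg, h₀, h₁⟩ := exists_mem_autGroup_map_adj hv hw (isNGeodesic_one_iff.1 hu)
    exact ⟨g, hg, Fin.forall_fin_two.2 ⟨h₀, h₁⟩⟩
  · refine ⟨⟨_, hvwx⟩, fun u u' hu hu' =>
      exists_mem_map_of_forall_exists_mem_map_to ![v, w, x] (fun u hu => ?_) hu hu'⟩
    obtain ⟨h₀₁, h₁₂, hne, hn⟩ := isNGeodesic_two_iff.1 hu
    obtain ⟨g, hg, h₀, h₁, h₂⟩ := exists_mem_autGroup_map_two_arc hv hw hx h₀₁ h₁₂ hne hn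
    exact ⟨g, hg, fun j => by fin_cases j <;> assumption⟩

end LocallyTransitive

def edgesBetweenCommonNeighbors [Fintype V] [DecidableRel Γ.Adj] (p : Fin 4 → V) :
    Finset (V × V) :=
  {e | Γ.Adj (p 0) e.1 ∧ Γ.Adj e.1 (p 2) ∧ Γ.Adj (p 1) e.2 ∧ Γ.Adj e.2 (p 3) ∧ Γ.Adj e.1 e.2}

theorem card_edgesBetweenCommonNeighbors_eq [Fintype V] [DecidableRel Γ.Adj]
    {f : Equiv.Perm V} (hf : f ∈ Γ.autGroup) {p q : Fin 4 → V} (hpq : ∀ j, f (p j) = q j) :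
    #(Γ.edgesBetweenCommonNeighbors p) = #(Γ.edgesBetweenCommonNeighbors q) :=
  card_equiv (f.prodCongr f) fun e => by
    simp only [edgesBetweenCommonNeighbors, mem_filter, mem_univ, true_and,
      Equiv.prodCongr_apply, Prod.map_fst, Prod.map_snd, ← hpq, mem_autGroup_iff.1 hf]

section Cayley

variable {G : Type*} [Group G] {Γ : SimpleGraph G} {S : Set G}
  (hΓ : ∀ x y, Γ.Adj x y ↔ y * x⁻¹ ∈ S)
include hΓ

theorem mulRight_mem_autGroup (g : G) : Equiv.mulRight g ∈ Γ.autGroup := fun x y => by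
  simp only [Equiv.coe_mulRight, hΓ, mul_inv_rev, mul_assoc, mul_inv_cancel_left]

theorem mulEquiv_mem_autGroup (φ : G ≃* G) (hφ : ∀ s, φ s ∈ S ↔ s ∈ S) :
    φ.toEquiv ∈ Γ.autGroup := fun x y => by
  simp only [hΓ, MulEquiv.toEquiv_eq_coe, EquivLike.coe_coe, ← map_inv, ← map_mul, hφ]

end Cayley

end SimpleGraph

namespace DihedralGroup

def dilate {n : ℕ} (k : (ZMod n)ˣ) : DihedralGroup n ≃* DihedralGroup n where
  toFun
    | r i => r (k * i)
    | sr i => sr (k * i)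
  invFun
    | r i => r (↑k⁻¹ * i)
    | sr i => sr (↑k⁻¹ * i)
  left_inv := by rintro (i | i) <;> simp
  right_inv := by rintro (i | i) <;> simp
  map_mul' := by rintro (i | i) (j | j) <;> simp [mul_add, mul_sub]

end DihedralGroup

instance : DecidableRel g226.Adj := fun x y => inferInstanceAs (Decidable (y * x⁻¹ ∈ g226S))

theorem g226_adj_iff (x y : DihedralGroup 11) : g226.Adj x y ↔ y * x⁻¹ ∈ (g226S : Set _) :=
  Iff.rfl

theorem dilate_sq_mem_g226S_iff (m : (ZMod 11)ˣ) (s : DihedralGroup 11) :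
    dilate (m ^ 2) s ∈ g226S ↔ s ∈ g226S := by
  revert m s
  decide

theorem dilate_sq_mem_g226_autGroup (m : (ZMod 11)ˣ) :
    (dilate (m ^ 2)).toEquiv ∈ g226.autGroup :=
  mulEquiv_mem_autGroup g226_adj_iff _ (dilate_sq_mem_g226S_iff m)

/-- An automorphism fixing `1` and exchanging `sr 0` and `sr 1`, found by computer search. The
dilations all fix `sr 0`, so they cannot move it to the other neighbours of `1`. -/
def g226Involution : DihedralGroup 11 → DihedralGroup 11
  | r i => r (![0, 2, 1, 10, 5, 4, 9, 7, 8, 6, 3] i)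
  | sr i => sr (![1, 0, 6, 4, 3, 5, 2, 10, 8, 9, 7] i)

theorem g226Involution_involutive : Function.Involutive g226Involution := by
  unfold Function.Involutive
  decide

theorem g226Involution_mem_autGroup :
    g226Involution_involutive.toPerm _ ∈ g226.autGroup := by
  show ∀ u v, g226.Adj (g226Involution u) (g226Involution v) ↔ g226.Adj u v
  decide

theorem g226_exists_mem_autGroup_fix_one_map_dihB {y : DihedralGroup 11} (hy : g226.Adj 1 y) :
    ∃ g ∈ g226.autGroup, g 1 = 1 ∧ g y = dihB := by
  obtain ⟨m, h | h⟩ : ∃ m : (ZMod 11)ˣ,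
      dilate (m ^ 2) y = dihB ∨ g226Involution (dilate (m ^ 2) y) = dihB := by
    revert y
    decide
  · exact ⟨_, dilate_sq_mem_g226_autGroup m, map_one (dilate _), h⟩
  · refine ⟨_, mul_mem g226Involution_mem_autGroup (dilate_sq_mem_g226_autGroup m), ?_, h⟩
    show g226Involution (dilate _ 1) = 1
    rw [map_one]
    rfl

theorem g226_exists_mem_autGroup_fix_one_dihB_map_r_two {y : DihedralGroup 11}
    (hy : g226.Adj dihB y) (hne : y ≠ 1) :
    ∃ g ∈ g226.autGroup, g 1 = 1 ∧ g dihB = dihB ∧ g y = r 2 := by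
  obtain ⟨m, hm⟩ : ∃ m : (ZMod 11)ˣ, dilate (m ^ 2) y = r 2 := by
    revert y
    decide
  exact ⟨_, dilate_sq_mem_g226_autGroup m, map_one (dilate _), by simp [dihB, dilate], hm⟩

/-- The Cayley graph `𝒢_{22,6} = Cay(G, S)` of the dihedral group
of order `22` with `S = {b, a²b, a⁶b, a⁷b, a⁸b, a¹⁰b}` is `2`-geodesic transitive but
not `3`-geodesic transitive: its automorphism group is transitive on `i`-geodesics
for `i = 1, 2`, but not on `3`-geodesics. -/
theorem g226_two_geodesic_transitive_not_three :
    g226.GeodesicTransitiveOn g226.autGroup 2 ∧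
      ¬ ∀ u w : Fin 4 → DihedralGroup 11, g226.IsNGeodesic 3 u → g226.IsNGeodesic 3 w →
          ∃ g ∈ g226.autGroup, ∀ j, g (u j) = w j := by
  have hv (u : DihedralGroup 11) : ∃ g ∈ g226.autGroup, g u = 1 :=
    ⟨_, mulRight_mem_autGroup g226_adj_iff u⁻¹, mul_inv_cancel u⟩
  refine ⟨geodesicTransitiveOn_autGroup_two hv
    (fun _ => g226_exists_mem_autGroup_fix_one_map_dihB)
    (fun _ hy hne _ => g226_exists_mem_autGroup_fix_one_dihB_map_r_two hy hne)
    (isNGeodesic_two_iff.2 (by decide)), fun h => ?_⟩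
  have h₆ : g226.IsNGeodesic 3 ![1, dihB, r 2, sr 6] := by apply isNGeodesic_three_of <;> decide
  have h₂ : g226.IsNGeodesic 3 ![1, dihB, r 2, sr 2] := by apply isNGeodesic_three_of <;> decide
  obtain ⟨g, hg, hgj⟩ := h _ _ h₆ h₂
  have hcard : #(g226.edgesBetweenCommonNeighbors ![1, dihB, r 2, sr 6]) = 5 ∧
      #(g226.edgesBetweenCommonNeighbors ![1, dihB, r 2, sr 2]) = 6 := by
    decide
  have := card_edgesBetweenCommonNeighbors_eq hg hgj
  omega
end
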